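/- Let V : {(X, Y, Z) ∈ ℝ³ : X + Y > 0} → ℝ be given by V(X, Y, Z) = Z(3X² − 3Y² − 5Z²)/(X + Y)^{7/2}. Then V satisfies the wave equation ∂²V/∂X² − ∂²V/∂Y² − ∂²V/∂Z² = 0 at every point with X + Y > 0. -/

import Mathlib

/-!
In light-cone coordinates `u = X + Y`, `v = X - Y` one has `3X² - 3Y² = 3uv`, so
`V = 3Zv u^{-5/2} - 5Z³ u^{-7/2}` and `∂²_X - ∂²_Y = 4 ∂_u ∂_v`, which kills the second term and
sends the first to `-30 Z u^{-7/2} = ∂²_Z V`. Formally, each slice of `V` is a quadratic polynomial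
divided by a real power of an affine function, whose second derivative is computed in closed form.
-/

open Filter Topology

theorem iteratedDeriv_two_eq_of_hasDerivAt {𝕜 F : Type*} [NontriviallyNormedField 𝕜]
    [NormedAddCommGroup F] [NormedSpace 𝕜 F] {f f' : 𝕜 → F} {f'' : F} {x : 𝕜}
    (hf : ∀ᶠ y in 𝓝 x, HasDerivAt f (f' y) y) (hf' : HasDerivAt f' f'' x) :
    iteratedDeriv 2 f x = f'' := by
  rw [iteratedDeriv_succ, iteratedDeriv_one]
  exact (hf'.congr_of_eventuallyEq (hf.mono fun _ hy => hy.deriv)).deriv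

theorem iteratedDeriv_two_cubic (a b x : ℝ) :
    iteratedDeriv 2 (fun z => a * z ^ 3 + b * z) x = 6 * a * x := by
  refine iteratedDeriv_two_eq_of_hasDerivAt (f' := fun y => 3 * a * y ^ 2 + b)
    (Eventually.of_forall fun y => ?_) ?_
  · exact (((hasDerivAt_pow 3 y).const_mul a).add ((hasDerivAt_id' y).const_mul b)).congr_deriv
      (by push_cast; ring)
  · exact (((hasDerivAt_pow 2 x).const_mul (3 * a)).add_const b).congr_deriv (by push_cast; ring)

section AffineRpow

variable {p : ℝ → ℝ} {p' : ℝ} (c t : ℝ) {x : ℝ}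

theorem HasDerivAt.mul_add_const_rpow (hp : HasDerivAt p p' x) (hx : x + c ≠ 0) :
    HasDerivAt (fun x => p x * (x + c) ^ t)
      (p' * (x + c) ^ t + t * p x * (x + c) ^ (t - 1)) x := by
  exact (hp.mul (((hasDerivAt_id' x).add_const c).rpow_const (Or.inl hx))).congr_deriv (by ring)

variable (a b : ℝ)

theorem hasDerivAt_quadratic (x : ℝ) :
    HasDerivAt (fun x => a * x ^ 2 + b) (2 * a * x) x := by
  exact (((hasDerivAt_pow 2 x).const_mul a).add_const b).congr_deriv (by push_cast; ring)

theorem iteratedDeriv_two_quadratic_mul_add_const_rpow (hx : 0 < x + c) :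
    iteratedDeriv 2 (fun x => (a * x ^ 2 + b) * (x + c) ^ t) x
      = (2 * a * (x + c) ^ 2 + 4 * a * t * x * (x + c) + t * (t - 1) * (a * x ^ 2 + b))
        * (x + c) ^ (t - 2) := by
  have hnhds : ∀ᶠ y in 𝓝 x, y + c ≠ 0 :=
    (by fun_prop : ContinuousAt (· + c) x).eventually_ne hx.ne'
  have hf' : HasDerivAt (fun y => 2 * a * y * (y + c) ^ t + t * (a * y ^ 2 + b) * (y + c) ^ (t - 1))
      ((2 * a * (x + c) ^ 2 + 4 * a * t * x * (x + c) + t * (t - 1) * (a * x ^ 2 + b))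
        * (x + c) ^ (t - 2)) x := by
    have h1 := ((hasDerivAt_id' x).const_mul (2 * a)).mul_add_const_rpow c t hx.ne'
    have h2 := ((hasDerivAt_quadratic a b x).const_mul t).mul_add_const_rpow c (t - 1) hx.ne'
    refine (h1.add h2).congr_deriv ?_
    have hpow_sub_one : (x + c) ^ (t - 1) = (x + c) ^ (t - 2) * (x + c) := by
      rw [← Real.rpow_add_one hx.ne']; ring_nf
    have hpow_eq : (x + c) ^ t = (x + c) ^ (t - 2) * (x + c) ^ 2 := by
      rw [← Real.rpow_two, ← Real.rpow_add hx]; ring_nf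
    rw [hpow_eq, show t - 1 - 1 = t - 2 by ring, hpow_sub_one]
    ring
  refine iteratedDeriv_two_eq_of_hasDerivAt (hnhds.mono fun y hy => ?_) hf'
  exact ((hasDerivAt_quadratic a b y).mul_add_const_rpow c t hy).congr_deriv (by ring)

theorem iteratedDeriv_two_quadratic_div_add_const_rpow (s : ℝ) (hx : 0 < x + c) :
    iteratedDeriv 2 (fun x => (a * x ^ 2 + b) / (x + c) ^ s) x
      = (2 * a * (x + c) ^ 2 - 4 * a * s * x * (x + c) + s * (s + 1) * (a * x ^ 2 + b))
        / (x + c) ^ (s + 2) := by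
  have hnhds : ∀ᶠ y in 𝓝 x, 0 < y + c :=
    continuousAt_const.eventually_lt (by fun_prop) hx
  have heq : (fun x => (a * x ^ 2 + b) / (x + c) ^ s) =ᶠ[𝓝 x]
      fun x => (a * x ^ 2 + b) * (x + c) ^ (-s) :=
    hnhds.mono fun y hy => by simp only [Real.rpow_neg hy.le, div_eq_mul_inv]
  rw [((heq.iteratedDeriv 2).eq_of_nhds), iteratedDeriv_two_quadratic_mul_add_const_rpow c _ a b hx,
    show -s - 2 = -(s + 2) by ring, Real.rpow_neg hx.le, div_eq_mul_inv]
  ring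

end AffineRpow

/-- The function `V(X,Y,Z) = Z(3X² − 3Y² − 5Z²)/(X+Y)^{7/2}` satisfies
the wave equation `V_XX − V_YY − V_ZZ = 0` at every point with `X + Y > 0`. -/
theorem stmt_5 (X Y Z : ℝ) (h : 0 < X + Y) :
    iteratedDeriv 2 (fun x : ℝ => Z * (3 * x ^ 2 - 3 * Y ^ 2 - 5 * Z ^ 2) / (x + Y) ^ ((7 : ℝ) / 2)) X
    - iteratedDeriv 2 (fun y : ℝ => Z * (3 * X ^ 2 - 3 * y ^ 2 - 5 * Z ^ 2) / (X + y) ^ ((7 : ℝ) / 2)) Y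
    - iteratedDeriv 2 (fun z : ℝ => z * (3 * X ^ 2 - 3 * Y ^ 2 - 5 * z ^ 2) / (X + Y) ^ ((7 : ℝ) / 2)) Z
    = 0 := by
  set s : ℝ := 7 / 2
  have hX : (fun x : ℝ => Z * (3 * x ^ 2 - 3 * Y ^ 2 - 5 * Z ^ 2) / (x + Y) ^ s)
      = fun x => (3 * Z * x ^ 2 + (-3 * Z * Y ^ 2 - 5 * Z ^ 3)) / (x + Y) ^ s := by
    funext x; ring
  have hY : (fun y : ℝ => Z * (3 * X ^ 2 - 3 * y ^ 2 - 5 * Z ^ 2) / (X + y) ^ s)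
      = fun y => (-3 * Z * y ^ 2 + (3 * Z * X ^ 2 - 5 * Z ^ 3)) / (y + X) ^ s := by
    funext y; rw [add_comm X y]; ring
  have hZ : (fun z : ℝ => z * (3 * X ^ 2 - 3 * Y ^ 2 - 5 * z ^ 2) / (X + Y) ^ s)
      = fun z => -5 / (X + Y) ^ s * z ^ 3 + (3 * X ^ 2 - 3 * Y ^ 2) / (X + Y) ^ s * z := by
    funext z; ring
  rw [hX, hY, hZ, iteratedDeriv_two_quadratic_div_add_const_rpow _ _ _ _ h,
    iteratedDeriv_two_quadratic_div_add_const_rpow _ _ _ _ (by linarith), iteratedDeriv_two_cubic,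
    add_comm Y X, Real.rpow_add h, Real.rpow_two]
  have hpos : 0 < (X + Y) ^ s := by positivity
  field_simp
  ring
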